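/- Let M be a finitely generated module over a Noetherian local ring with dimension filtration D_0 ⊂ D_1 ⊂ … ⊂ D_t = M. If N is any submodule of M, then there exists an index i with N ⊆ D_i and dim N = dim D_i (when N ≠ 0). -/

import Mathlib

open IsLocalRing

/-- Krull dimension of a module: the Krull dimension of its support in `Spec R`. -/
noncomputable def mDim (R : Type*) [CommRing R] (M : Type*) [AddCommGroup M] [Module R M] :
    WithBot (WithTop ℕ) :=
  Order.krullDim (Module.support R M)

/-- Length of a module, as the Krull dimension of its lattice of submodules. -/
noncomputable def eLength (R : Type*) [Ring R] (M : Type*) [AddCommGroup M] [Module R M] : ℕ∞ :=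
  (Order.krullDim (Submodule R M)).unbotD 0

/-- A system of parameters of `M`: `n = dim M` elements of the maximal ideal such that the
quotient of `M` by them has finite length. -/
def IsSOP (R : Type*) [CommRing R] [IsLocalRing R] (M : Type*) [AddCommGroup M] [Module R M]
    (n : ℕ) (x : Fin n → R) : Prop :=
  mDim R M = (n : WithBot (WithTop ℕ)) ∧ (∀ j, x j ∈ maximalIdeal R) ∧
    IsFiniteLength R (M ⧸ (Ideal.span (Set.range x) • (⊤ : Submodule R M)))

/-- A good system of parameters of `M` with respect to the filtration `F 0 ⊆ F 1 ⊆ ... ⊆ F t = M`: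
a system of parameters `x` such that `(x_{d_i+1}, …, x_d) M ∩ F i = 0` where `d_i = dim (F i)`
(indices are zero-based, so the condition is over `j` with `d_i ≤ j`). -/
def IsGoodSOP (R : Type*) [CommRing R] [IsLocalRing R] (M : Type*) [AddCommGroup M] [Module R M]
    (t : ℕ) (F : ℕ → Submodule R M) (n : ℕ) (x : Fin n → R) : Prop :=
  IsSOP R M n x ∧ ∀ i < t,
    (Ideal.span (x '' {j | mDim R ↥(F i) ≤ (j.val : WithBot (WithTop ℕ))}) • (⊤ : Submodule R M)) ⊓ F i = ⊥

/-- `D 0 ⊆ D 1 ⊆ ... ⊆ D t = M` is the dimension filtration of `M`: `D 0 = H^0_m(M)`,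
dimensions strictly increase, and each `D i` is the largest submodule of `D (i+1)` of strictly
smaller dimension. -/
def IsDimFiltration (R : Type*) [CommRing R] [IsLocalRing R] (M : Type*) [AddCommGroup M]
    [Module R M] (t : ℕ) (D : ℕ → Submodule R M) : Prop :=
  D t = ⊤ ∧
  (∀ x : M, x ∈ D 0 ↔ ∃ n : ℕ, ∀ r ∈ (maximalIdeal R) ^ n, r • x = 0) ∧
  (∀ i < t, mDim R ↥(D i) < mDim R ↥(D (i + 1))) ∧
  (∀ i < t, ∀ N : Submodule R M, N ≤ D (i + 1) → mDim R ↥N < mDim R ↥(D (i + 1)) → N ≤ D i)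

/-- A filtration `F 0 ⊆ F 1 ⊆ ... ⊆ F t = M` satisfying the dimension condition:
strictly increasing dimensions. -/
def DimCond (R : Type*) [CommRing R] (M : Type*) [AddCommGroup M] [Module R M]
    (t : ℕ) (F : ℕ → Submodule R M) : Prop :=
  F t = ⊤ ∧ (∀ i < t, F i ≤ F (i + 1)) ∧ ∀ i < t, mDim R ↥(F i) < mDim R ↥(F (i + 1))

/-- A ring is catenary if any two saturated chains of primes with the same endpoints have
the same length. -/
def IsCatenary (R : Type*) [CommRing R] : Prop :=
  ∀ c₁ c₂ : LTSeries (PrimeSpectrum R), c₁.head = c₂.head → c₁.last = c₂.last →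
    (∀ i : Fin c₁.length, ¬ ∃ q, c₁ i.castSucc < q ∧ q < c₁ i.succ) →
    (∀ i : Fin c₂.length, ¬ ∃ q, c₂ i.castSucc < q ∧ q < c₂ i.succ) →
    c₁.length = c₂.length

/-- A finitely generated module over a Noetherian local ring is Cohen-Macaulay if it is zero or
has a system of parameters which is a regular sequence on it. -/
def IsCMMod (R : Type*) [CommRing R] [IsLocalRing R] (M : Type*) [AddCommGroup M]
    [Module R M] : Prop :=
  Subsingleton M ∨
    ∃ (n : ℕ) (x : Fin n → R), IsSOP R M n x ∧ RingTheory.Sequence.IsRegular M (List.ofFn x)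

/-- A module is sequentially Cohen-Macaulay if every quotient of consecutive terms of its
dimension filtration is Cohen-Macaulay. -/
def IsSeqCM (R : Type*) [CommRing R] [IsLocalRing R] (M : Type*) [AddCommGroup M]
    [Module R M] : Prop :=
  ∃ (t : ℕ) (D : ℕ → Submodule R M), IsDimFiltration R M t D ∧
    ∀ i, 1 ≤ i → i ≤ t → IsCMMod R (↥(D i) ⧸ (D (i - 1)).comap (D i).subtype)

/-!
Take the least `i` with `N ≤ D i`. If `i = 0`, then `N` is a nonzero submodule of `H⁰_𝔪(M)`,
whose support lies in `{𝔪}`, so both dimensions are `0`. If `i > 0` and `dim N < dim D i`, then the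
maximality of `D (i - 1)` inside `D i` forces `N ≤ D (i - 1)`, contradicting minimality.
-/

section mDim

variable {R M M' : Type*} [CommRing R] [AddCommGroup M] [Module R M]
  [AddCommGroup M'] [Module R M']

lemma mDim_le_of_injective (f : M →ₗ[R] M') (hf : Function.Injective f) :
    mDim R M ≤ mDim R M' :=
  Order.krullDim_le_of_strictMono (Set.inclusion (Module.support_subset_of_injective f hf))
    fun _ _ h ↦ h

lemma mDim_mono {N P : Submodule R M} (h : N ≤ P) : mDim R N ≤ mDim R P :=
  mDim_le_of_injective (Submodule.inclusion h) (Submodule.inclusion_injective h)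

lemma mDim_nonneg [Nontrivial M] : 0 ≤ mDim R M :=
  have := (Module.nonempty_support_of_nontrivial (R := R) (M := M)).to_subtype
  Order.krullDim_nonneg

variable [IsLocalRing R]

lemma eq_maximalIdeal_of_mem_support
    (h : ∀ x : M, ∃ n : ℕ, ∀ r ∈ maximalIdeal R ^ n, r • x = 0)
    {p : PrimeSpectrum R} (hp : p ∈ Module.support R M) : p.asIdeal = maximalIdeal R := by
  refine le_antisymm (le_maximalIdeal p.isPrime.ne_top) fun r hr ↦ ?_
  by_contra hrp
  obtain ⟨x, hx⟩ := Module.mem_support_iff'.mp hp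
  obtain ⟨n, hn⟩ := h x
  exact hx (r ^ n) (fun h ↦ hrp (p.isPrime.mem_of_pow_mem n h)) (hn _ (Ideal.pow_mem_pow hr n))

lemma mDim_nonpos_of_forall_pow_smul_eq_zero
    (h : ∀ x : M, ∃ n : ℕ, ∀ r ∈ maximalIdeal R ^ n, r • x = 0) : mDim R M ≤ 0 := by
  have : Subsingleton (Module.support R M) := Set.subsingleton_coe _ |>.mpr
    fun p hp q hq ↦ PrimeSpectrum.ext <|
      (eq_maximalIdeal_of_mem_support h hp).trans (eq_maximalIdeal_of_mem_support h hq).symm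
  exact Order.krullDim_nonpos_of_subsingleton

end mDim

lemma IsDimFiltration.mDim_zero_nonpos {R M : Type*} [CommRing R] [IsLocalRing R]
    [AddCommGroup M] [Module R M] {t : ℕ} {D : ℕ → Submodule R M} (hD : IsDimFiltration R M t D) :
    mDim R (D 0) ≤ 0 :=
  mDim_nonpos_of_forall_pow_smul_eq_zero fun x ↦
    let ⟨n, hn⟩ := (hD.2.1 x).mp x.2
    ⟨n, fun r hr ↦ Subtype.ext (hn r hr)⟩

theorem stmt4_general {R M : Type*} [CommRing R] [IsLocalRing R]
    [AddCommGroup M] [Module R M]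
    (t : ℕ) (D : ℕ → Submodule R M) (hD : IsDimFiltration R M t D) :
    ∀ N : Submodule R M, N ≠ ⊥ → ∃ i ≤ t, N ≤ D i ∧ mDim R ↥N = mDim R ↥(D i) := by
  classical
  intro N hN
  have hNt : N ≤ D t := hD.1 ▸ le_top
  have hex : ∃ i, N ≤ D i := ⟨t, hNt⟩
  have hNi : N ≤ D (Nat.find hex) := Nat.find_spec hex
  have hit : Nat.find hex ≤ t := Nat.find_le hNt
  refine ⟨Nat.find hex, hit, hNi, (mDim_mono hNi).antisymm ?_⟩
  cases hi : Nat.find hex with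
  | zero =>
    have : Nontrivial N := Submodule.nontrivial_iff_ne_bot.mpr hN
    exact hD.mDim_zero_nonpos.trans mDim_nonneg
  | succ k =>
    by_contra! hlt
    rw [hi] at hNi
    exact Nat.find_min hex (by omega) (hD.2.2.2 k (by omega) N hNi hlt)

/-- every nonzero submodule `N ⊆ M` is contained in some term `D i` of the
dimension filtration with `dim N = dim D i`. -/
theorem stmt4 {R M : Type*} [CommRing R] [IsNoetherianRing R] [IsLocalRing R]
    [AddCommGroup M] [Module R M] [Module.Finite R M]
    (t : ℕ) (D : ℕ → Submodule R M) (hD : IsDimFiltration R M t D) :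
    ∀ N : Submodule R M, N ≠ ⊥ → ∃ i ≤ t, N ≤ D i ∧ mDim R ↥N = mDim R ↥(D i) :=
  stmt4_general t D hD
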